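/- arXiv:1407.0638 — 4 statements merged into one kernel-verified Lean document; each statement's English description precedes it below -/
import Mathlib

section
/- For {i, j} ⊂ {1, 2, 3} with i < j, let ι_{ij} : O(2) → SO(3) denote the block embedding which places A ∈ O(2) in the rows and columns i, j and places det A in the remaining diagonal entry. Then for any two distinct such pairs {i, j} ≠ {i', j'}, the subgroup of SO(3) generated by the images of ι_{ij} and ι_{i'j'} is all of SO(3). -/
/-! The image of `ι_{ij}` is the stabiliser in `SO(3)` of the coordinate axis `e k`, `k ∉ {i, j}`.
If the second pair fixes the axis `k' ≠ k`, a rotation about `k'` followed by one about `k` takes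
`e k` to any unit vector, just as with Euler angles. So for `g ∈ SO(3)` the generated group contains
some `h` with `h e k = g e k`; then `h⁻¹ g` fixes `e k`, lies in the image of `ι_{ij}`, and
`g = h (h⁻¹ g)` is generated. -/

open Matrix

/-- The block embedding `O(2) → SO(3)` placing `A ∈ O(2)` in the rows and columns `i, j`
and `det A` in the remaining diagonal entry. -/
def blockEmbed (i j : Fin 3) (A : Matrix (Fin 2) (Fin 2) ℝ) : Matrix (Fin 3) (Fin 3) ℝ :=
  fun r s =>
    if r = i then (if s = i then A 0 0 else if s = j then A 0 1 else 0)
    else if r = j then (if s = i then A 1 0 else if s = j then A 1 1 else 0)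
    else if s = r then A.det else 0

/-- `SO(3)` as the subgroup of the orthogonal group `O(3)` of matrices of determinant one. -/
def SO3 : Subgroup (Matrix.orthogonalGroup (Fin 3) ℝ) where
  carrier := {g | Matrix.det (g : Matrix (Fin 3) (Fin 3) ℝ) = 1}
  one_mem' := by simp
  mul_mem' := by
    intro a b ha hb
    simp only [Set.mem_setOf_eq] at *
    rw [Submonoid.coe_mul, Matrix.det_mul, ha, hb, mul_one]
  inv_mem' := by
    intro a ha
    simp only [Set.mem_setOf_eq] at *
    have h : ((a⁻¹ * a : Matrix.orthogonalGroup (Fin 3) ℝ) : Matrix (Fin 3) (Fin 3) ℝ) = 1 := by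
      rw [inv_mul_cancel]; rfl
    rw [Submonoid.coe_mul] at h
    have := congrArg Matrix.det h
    rw [Matrix.det_mul, ha, mul_one, Matrix.det_one] at this
    exact this

theorem Fin.exists_ne_and_ne (i j : Fin 3) : ∃ k, k ≠ i ∧ k ≠ j := by
  revert i j; decide

theorem Fin.eq_or_eq_or_eq_of_ne {i j k : Fin 3} (hij : i ≠ j) (hki : k ≠ i) (hkj : k ≠ j)
    (r : Fin 3) : r = i ∨ r = j ∨ r = k := by
  revert i j k r; decide

theorem Fin.sum_univ_three_of_ne {M : Type*} [AddCommMonoid M] {i j k : Fin 3} (hij : i ≠ j)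
    (hki : k ≠ i) (hkj : k ≠ j) (f : Fin 3 → M) : ∑ t, f t = f i + f j + f k := by
  fin_cases i <;> fin_cases j <;> fin_cases k <;> simp_all [Fin.sum_univ_three] <;> abel

theorem Matrix.det_fin_three_of_row_eq_zero {R : Type*} [CommRing R]
    (M : Matrix (Fin 3) (Fin 3) R) {i j k : Fin 3} (hij : i ≠ j) (hki : k ≠ i) (hkj : k ≠ j)
    (hrow : ∀ s ≠ k, M k s = 0) :
    M.det = M k k * !![M i i, M i j; M j i, M j j].det := by
  have hi := hrow i hki.symm
  have hj := hrow j hkj.symm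
  fin_cases i <;> fin_cases j <;> fin_cases k <;> simp_all [det_fin_three, det_fin_two] <;> ring

theorem Matrix.mulVec_dotProduct_mulVec_of_mem_orthogonalGroup {n R : Type*} [Fintype n]
    [DecidableEq n] [CommRing R] {g : Matrix n n R} (hg : g ∈ orthogonalGroup n R)
    (x y : n → R) : (g *ᵥ x) ⬝ᵥ (g *ᵥ y) = x ⬝ᵥ y := by
  rw [dotProduct_mulVec, ← mulVec_transpose, mulVec_mulVec, (mem_orthogonalGroup_iff' n R).mp hg,
    one_mulVec]

theorem Matrix.exists_mem_specialOrthogonalGroup_mulVec_eq {p q : Fin 2 → ℝ}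
    (h : p ⬝ᵥ p = q ⬝ᵥ q) : ∃ A ∈ specialOrthogonalGroup (Fin 2) ℝ, A *ᵥ p = q := by
  by_cases hp : p = 0
  · have hq : q = 0 := by rw [← dotProduct_self_eq_zero, ← h, hp, zero_dotProduct]
    exact ⟨1, one_mem _, by simp [hp, hq]⟩
  have hn : p 0 ^ 2 + p 1 ^ 2 ≠ 0 := by
    simpa [dotProduct, Fin.sum_univ_two, sq] using dotProduct_self_eq_zero.not.mpr hp
  have hpq : p 0 ^ 2 + p 1 ^ 2 = q 0 ^ 2 + q 1 ^ 2 := by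
    simpa [dotProduct, Fin.sum_univ_two, sq] using h
  -- the rotation with cosine `⟪p, q⟫ / ‖p‖²` and sine `(p × q) / ‖p‖²`
  refine ⟨!![(p 0 * q 0 + p 1 * q 1) / (p 0 ^ 2 + p 1 ^ 2),
      -((p 0 * q 1 - p 1 * q 0) / (p 0 ^ 2 + p 1 ^ 2));
      (p 0 * q 1 - p 1 * q 0) / (p 0 ^ 2 + p 1 ^ 2),
      (p 0 * q 0 + p 1 * q 1) / (p 0 ^ 2 + p 1 ^ 2)], ?_, ?_⟩
  · rw [of_mem_specialOrthogonalGroup_fin_two_iff]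
    refine ⟨rfl, rfl, ?_⟩
    field_simp
    linear_combination (-(p 0 ^ 2 + p 1 ^ 2)) * hpq
  · ext r
    fin_cases r <;> simp [mulVec, dotProduct, Fin.sum_univ_two] <;> field_simp <;> ring

section BlockEmbed

variable {i j k : Fin 3}

theorem blockEmbed_mulVec (hij : i ≠ j) (A : Matrix (Fin 2) (Fin 2) ℝ) (x : Fin 3 → ℝ) :
    blockEmbed i j A *ᵥ x = fun r =>
      if r = i then A 0 0 * x i + A 0 1 * x j
      else if r = j then A 1 0 * x i + A 1 1 * x j
      else A.det * x r := by
  funext r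
  fin_cases i <;> fin_cases j <;> fin_cases r <;>
    simp_all [blockEmbed, mulVec, dotProduct, Fin.sum_univ_three] <;> ring

theorem blockEmbed_one (hij : i ≠ j) : blockEmbed i j 1 = 1 := by
  ext r s
  fin_cases i <;> fin_cases j <;> fin_cases r <;> fin_cases s <;> simp_all [blockEmbed]

theorem blockEmbed_mul (hij : i ≠ j) (A B : Matrix (Fin 2) (Fin 2) ℝ) :
    blockEmbed i j (A * B) = blockEmbed i j A * blockEmbed i j B := by
  ext r s
  fin_cases i <;> fin_cases j <;> fin_cases r <;> fin_cases s <;>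
    simp_all [blockEmbed, mul_apply, Fin.sum_univ_three, Fin.sum_univ_two, det_fin_two] <;> ring

theorem blockEmbed_transpose (hij : i ≠ j) (A : Matrix (Fin 2) (Fin 2) ℝ) :
    blockEmbed i j Aᵀ = (blockEmbed i j A)ᵀ := by
  ext r s
  fin_cases i <;> fin_cases j <;> fin_cases r <;> fin_cases s <;>
    simp_all [blockEmbed, det_fin_two]

theorem blockEmbed_injective (hij : i ≠ j) : Function.Injective (blockEmbed i j) := by
  intro A B h
  have h' (r s : Fin 3) := congrFun (congrFun h r) s
  ext r s
  fin_cases r <;> fin_cases s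
  · simpa [blockEmbed] using h' i i
  · simpa [blockEmbed, hij.symm] using h' i j
  · simpa [blockEmbed, hij.symm] using h' j i
  · simpa [blockEmbed, hij.symm] using h' j j

theorem blockEmbed_mem_orthogonalGroup (hij : i ≠ j) {A : Matrix (Fin 2) (Fin 2) ℝ}
    (hA : A ∈ orthogonalGroup (Fin 2) ℝ) : blockEmbed i j A ∈ orthogonalGroup (Fin 3) ℝ := by
  rw [mem_orthogonalGroup_iff'] at hA ⊢
  rw [← blockEmbed_transpose hij, ← blockEmbed_mul hij, hA, blockEmbed_one hij]

theorem det_blockEmbed (hij : i ≠ j) (A : Matrix (Fin 2) (Fin 2) ℝ) :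
    (blockEmbed i j A).det = A.det ^ 2 := by
  obtain ⟨k, hki, hkj⟩ := Fin.exists_ne_and_ne i j
  rw [det_fin_three_of_row_eq_zero _ hij hki hkj fun s hs => by simp [blockEmbed, hki, hkj, hs]]
  simp [blockEmbed, hij.symm, hki, hkj, ← eta_fin_two, sq]

def blockEmbedImage (i j : Fin 3) : Set (orthogonalGroup (Fin 3) ℝ) :=
  {g | ∃ A, Aᵀ * A = 1 ∧ (g : Matrix (Fin 3) (Fin 3) ℝ) = blockEmbed i j A}

theorem blockEmbedImage_subset_SO3 (hij : i ≠ j) : blockEmbedImage i j ⊆ SO3 := by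
  rintro g ⟨A, hA, hgA⟩
  change (g : Matrix (Fin 3) (Fin 3) ℝ).det = 1
  have hdet := congrArg det hA
  rw [det_mul, det_transpose, det_one] at hdet
  rw [hgA, det_blockEmbed hij, sq, hdet]

theorem exists_mem_blockEmbedImage_mulVec_eq (hij : i ≠ j) (hki : k ≠ i) (hkj : k ≠ j)
    {x y : Fin 3 → ℝ} (hk : x k = y k) (hxy : x ⬝ᵥ x = y ⬝ᵥ y) :
    ∃ g ∈ blockEmbedImage i j, (g : Matrix (Fin 3) (Fin 3) ℝ) *ᵥ x = y := by
  have hxy' : ![x i, x j] ⬝ᵥ ![x i, x j] = ![y i, y j] ⬝ᵥ ![y i, y j] := by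
    simp only [dotProduct, Fin.sum_univ_three_of_ne hij hki hkj, hk] at hxy
    simpa [dotProduct, Fin.sum_univ_two] using hxy
  obtain ⟨A, hA, hAxy⟩ := exists_mem_specialOrthogonalGroup_mulVec_eq hxy'
  rw [mem_specialOrthogonalGroup_iff] at hA
  refine ⟨⟨blockEmbed i j A, blockEmbed_mem_orthogonalGroup hij hA.1⟩,
    ⟨A, (mem_orthogonalGroup_iff' _ _).mp hA.1, rfl⟩, ?_⟩
  have hi := congrFun hAxy 0
  have hj := congrFun hAxy 1
  simp only [mulVec, dotProduct, Fin.sum_univ_two] at hi hj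
  funext r
  rw [blockEmbed_mulVec hij]
  rcases Fin.eq_or_eq_or_eq_of_ne hij hki hkj r with rfl | rfl | rfl
  · simpa using hi
  · simpa [hij.symm] using hj
  · simp [hki, hkj, hA.2, hk]

theorem mem_blockEmbedImage_of_mulVec_single (hij : i ≠ j) (hki : k ≠ i) (hkj : k ≠ j)
    {g : orthogonalGroup (Fin 3) ℝ} (hg : g ∈ SO3)
    (hgk : (g : Matrix (Fin 3) (Fin 3) ℝ) *ᵥ Pi.single k 1 = Pi.single k 1) :
    g ∈ blockEmbedImage i j := by
  set G : Matrix (Fin 3) (Fin 3) ℝ := ↑g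
  have hG : Gᵀ * G = 1 := (mem_orthogonalGroup_iff' _ _).mp g.2
  have hcol (r : Fin 3) : G r k = (Pi.single k 1 : Fin 3 → ℝ) r := by
    simpa [mulVec_single_one] using congrFun hgk r
  have hrow (s : Fin 3) : G k s = (Pi.single k 1 : Fin 3 → ℝ) s := by
    have : Gᵀ *ᵥ Pi.single k 1 = Pi.single k 1 := by
      nth_rewrite 1 [← hgk]
      rw [mulVec_mulVec, hG, one_mulVec]
    simpa [mulVec_single_one] using congrFun this s
  set A : Matrix (Fin 2) (Fin 2) ℝ := !![G i i, G i j; G j i, G j j]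
  have hA : A.det = 1 := by
    have := det_fin_three_of_row_eq_zero G hij hki hkj fun s hs => by simp [hrow, hs]
    rwa [show G.det = 1 from hg, hrow, Pi.single_eq_same, one_mul, eq_comm] at this
  have hGA : G = blockEmbed i j A := by
    ext r s
    rcases Fin.eq_or_eq_or_eq_of_ne hij hki hkj r with rfl | rfl | rfl <;>
    rcases Fin.eq_or_eq_or_eq_of_ne hij hki hkj s with rfl | rfl | rfl <;>
    simp [blockEmbed, A, hcol, hrow, hA, hij.symm, hki, hkj, hki.symm, hkj.symm]
  refine ⟨A, blockEmbed_injective hij ?_, hGA⟩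
  rw [blockEmbed_mul hij, blockEmbed_transpose hij, blockEmbed_one hij, ← hGA, hG]

variable {i' j' k' : Fin 3}

theorem closure_blockEmbedImage_union_le_SO3 (hij : i ≠ j) (hij' : i' ≠ j') :
    Subgroup.closure (blockEmbedImage i j ∪ blockEmbedImage i' j') ≤ SO3 :=
  (Subgroup.closure_le _).mpr <|
    Set.union_subset (blockEmbedImage_subset_SO3 hij) (blockEmbedImage_subset_SO3 hij')

theorem exists_mem_closure_blockEmbedImage_mulVec_single_eq (hij : i ≠ j) (hki : k ≠ i)
    (hkj : k ≠ j) (hij' : i' ≠ j') (hk'i' : k' ≠ i') (hk'j' : k' ≠ j') (hkk' : k ≠ k')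
    {v : Fin 3 → ℝ} (hv : v ⬝ᵥ v = 1) :
    ∃ h ∈ Subgroup.closure (blockEmbedImage i j ∪ blockEmbedImage i' j'),
      (h : Matrix (Fin 3) (Fin 3) ℝ) *ᵥ Pi.single k 1 = v := by
  obtain ⟨c, hck, hck'⟩ := Fin.exists_ne_and_ne k k'
  have hv' : v k ^ 2 + v k' ^ 2 + v c ^ 2 = 1 := by
    simpa [dotProduct, Fin.sum_univ_three_of_ne hkk' hck hck', sq] using hv
  -- `w` lies in the plane `x k' = 0` and has the `k`-coordinate of `v`, so a rotation about the
  -- axis `k'` takes `e k` to `w`, and one about the axis `k` takes `w` to `v`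
  set w : Fin 3 → ℝ := fun t => if t = k' then 0 else if t = k then v k else √(v k' ^ 2 + v c ^ 2)
  have hw : w ⬝ᵥ w = 1 := by
    rw [dotProduct, Fin.sum_univ_three_of_ne hkk' hck hck']
    simp only [w, hkk', hck, hck', ↓reduceIte]
    rw [Real.mul_self_sqrt (by positivity)]
    linarith
  obtain ⟨h₂, hh₂, hw₂⟩ := exists_mem_blockEmbedImage_mulVec_eq hij' hk'i' hk'j'
    (x := Pi.single k 1) (y := w) (by simp [w, hkk'.symm]) (by simp [hw])
  obtain ⟨h₁, hh₁, hv₁⟩ := exists_mem_blockEmbedImage_mulVec_eq hij hki hkj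
    (x := w) (y := v) (by simp [w, hkk']) (by rw [hw, hv])
  refine ⟨h₁ * h₂, mul_mem (Subgroup.subset_closure (Or.inl hh₁))
    (Subgroup.subset_closure (Or.inr hh₂)), ?_⟩
  rw [Submonoid.coe_mul, ← mulVec_mulVec, hw₂, hv₁]

theorem SO3_le_closure_blockEmbedImage (hij : i ≠ j) (hki : k ≠ i) (hkj : k ≠ j)
    (hij' : i' ≠ j') (hk'i' : k' ≠ i') (hk'j' : k' ≠ j') (hkk' : k ≠ k') :
    SO3 ≤ Subgroup.closure (blockEmbedImage i j ∪ blockEmbedImage i' j') := by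
  intro g hg
  have hunit : ((g : Matrix (Fin 3) (Fin 3) ℝ) *ᵥ Pi.single k 1) ⬝ᵥ
      ((g : Matrix (Fin 3) (Fin 3) ℝ) *ᵥ Pi.single k 1) = 1 := by
    rw [mulVec_dotProduct_mulVec_of_mem_orthogonalGroup g.2]
    simp
  obtain ⟨h, hh, hhk⟩ := exists_mem_closure_blockEmbedImage_mulVec_single_eq hij hki hkj hij'
    hk'i' hk'j' hkk' hunit
  have hfix : ((h⁻¹ * g : orthogonalGroup (Fin 3) ℝ) : Matrix (Fin 3) (Fin 3) ℝ) *ᵥ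
      Pi.single k 1 = Pi.single k 1 := by
    rw [Submonoid.coe_mul, ← mulVec_mulVec, ← hhk, mulVec_mulVec, ← Submonoid.coe_mul,
      inv_mul_cancel, Submonoid.coe_one, one_mulVec]
  have hrest := mem_blockEmbedImage_of_mulVec_single hij hki hkj
    (SO3.mul_mem (SO3.inv_mem (closure_blockEmbedImage_union_le_SO3 hij hij' hh)) hg) hfix
  simpa using mul_mem hh (Subgroup.subset_closure (Or.inl hrest))

end BlockEmbed

/-- For any two distinct pairs `{i, j} ≠ {i', j'}`, the subgroup of `SO(3)` generated by the
images of the block embeddings `ι_{ij}, ι_{i'j'} : O(2) → SO(3)` is all of `SO(3)`. -/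
theorem blockEmbed_images_generate_SO3 (i j i' j' : Fin 3) (hij : i < j) (hij' : i' < j')
    (hne : (i, j) ≠ (i', j')) :
    Subgroup.closure
        ({g : Matrix.orthogonalGroup (Fin 3) ℝ |
            ∃ A, Aᵀ * A = 1 ∧ (g : Matrix (Fin 3) (Fin 3) ℝ) = blockEmbed i j A} ∪
          {g | ∃ A, Aᵀ * A = 1 ∧ (g : Matrix (Fin 3) (Fin 3) ℝ) = blockEmbed i' j' A}) =
      SO3 := by
  refine le_antisymm (closure_blockEmbedImage_union_le_SO3 hij.ne hij'.ne) ?_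
  obtain ⟨k, hki, hkj⟩ := Fin.exists_ne_and_ne i j
  obtain ⟨k', hk'i', hk'j'⟩ := Fin.exists_ne_and_ne i' j'
  have hkk' : k ≠ k' := by
    rintro rfl
    -- an ordered pair in `Fin 3` is determined by the index it misses
    exact hne (by revert i j i' j' k; decide)
  exact SO3_le_closure_blockEmbedImage hij.ne hki hkj hij'.ne hk'i' hk'j' hkk'
end

section
/- For {i, j} ⊂ {1, 2, 3} with i < j, let ι_{ij} : O(2) → SO(3) denote the block embedding which places A ∈ O(2) in the rows and columns i, j and places det A in the remaining diagonal entry. Then for any two distinct pairs {i, j} ≠ {i', j'}, the intersection of the images of ι_{ij} and ι_{i'j'} equals the group of diagonal matrices with diagonal entries in {1, −1} and determinant 1 (a group of order 4). -/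
open Matrix

lemma fwd (i j : Fin 3) (hij : i < j) (A : Matrix (Fin 2) (Fin 2) ℝ)
    (hA : Aᵀ * A = 1) (h01 : A 0 1 = 0) (h10 : A 1 0 = 0) :
    ∃ d : Fin 3 → ℝ, (∀ l, d l = 1 ∨ d l = -1) ∧ (Matrix.diagonal d).det = 1 ∧
      blockEmbed i j A = Matrix.diagonal d := by
  have e00 := congrFun (congrFun hA 0) 0
  have e11 := congrFun (congrFun hA 1) 1
  simp [Matrix.mul_apply, Fin.sum_univ_two, Matrix.one_apply, h01, h10] at e00 e11
  have h00 := mul_self_eq_one_iff.mp e00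
  have h11 := mul_self_eq_one_iff.mp e11
  have hdetA : A.det = A 0 0 * A 1 1 := by simp [Matrix.det_fin_two, h01, h10]
  have hpm : A 0 0 * A 1 1 = 1 ∨ A 0 0 * A 1 1 = -1 := by
    rcases h00 with h|h <;> rcases h11 with h'|h' <;> simp [h, h']
  fin_cases i <;> fin_cases j <;> (try exact absurd hij (by decide)) <;>
  [ refine ⟨![A 0 0, A 1 1, A 0 0 * A 1 1], ?_, ?_, ?_⟩;
    refine ⟨![A 0 0, A 0 0 * A 1 1, A 1 1], ?_, ?_, ?_⟩;
    refine ⟨![A 0 0 * A 1 1, A 0 0, A 1 1], ?_, ?_, ?_⟩ ] <;>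
  first
  | (intro l; fin_cases l <;> simp_all)
  | (simp [Matrix.det_diagonal, Fin.prod_univ_three]; nlinarith [e00, e11])
  | (ext r s; fin_cases r <;> fin_cases s <;> simp [blockEmbed, hdetA, h01, h10, Matrix.diagonal])

lemma diag2_orth (a b : ℝ) (ha : a = 1 ∨ a = -1) (hb : b = 1 ∨ b = -1) :
    (!![a, 0; 0, b])ᵀ * !![a, 0; 0, b] = 1 := by
  have ha' : a * a = 1 := by rcases ha with h|h <;> rw [h] <;> norm_num
  have hb' : b * b = 1 := by rcases hb with h|h <;> rw [h] <;> norm_num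
  ext r s
  fin_cases r <;> fin_cases s <;>
    simp [Matrix.mul_apply, Fin.sum_univ_two, Matrix.one_apply, Matrix.transpose_apply,
      Matrix.vecHead, Matrix.vecTail, ha', hb']

lemma bwd (i j : Fin 3) (hij : i < j) (d : Fin 3 → ℝ)
    (hd : ∀ l, d l = 1 ∨ d l = -1) (hdet : (Matrix.diagonal d).det = 1) :
    ∃ A : Matrix (Fin 2) (Fin 2) ℝ, Aᵀ * A = 1 ∧ Matrix.diagonal d = blockEmbed i j A := by
  simp only [Matrix.det_diagonal, Fin.prod_univ_three] at hdet
  have h0 := hd 0; have h1 := hd 1; have h2 := hd 2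
  fin_cases i <;> fin_cases j <;> (try exact absurd hij (by decide))
  · refine ⟨!![d 0, 0; 0, d 1], diag2_orth _ _ h0 h1, ?_⟩
    have hk : d 2 = d 0 * d 1 := by
      rcases h0 with h|h <;> rcases h1 with h'|h' <;> rcases h2 with h''|h'' <;> simp_all
    ext r s
    fin_cases r <;> fin_cases s <;>
      simp [blockEmbed, Matrix.det_fin_two_of, Matrix.diagonal, hk]
  · refine ⟨!![d 0, 0; 0, d 2], diag2_orth _ _ h0 h2, ?_⟩
    have hk : d 1 = d 0 * d 2 := by
      rcases h0 with h|h <;> rcases h1 with h'|h' <;> rcases h2 with h''|h'' <;> simp_all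
    ext r s
    fin_cases r <;> fin_cases s <;>
      simp [blockEmbed, Matrix.det_fin_two_of, Matrix.diagonal, hk]
  · refine ⟨!![d 1, 0; 0, d 2], diag2_orth _ _ h1 h2, ?_⟩
    have hk : d 0 = d 1 * d 2 := by
      rcases h0 with h|h <;> rcases h1 with h'|h' <;> rcases h2 with h''|h'' <;> simp_all
    ext r s
    fin_cases r <;> fin_cases s <;>
      simp [blockEmbed, Matrix.det_fin_two_of, Matrix.diagonal, hk]

/-- For two distinct pairs `{i, j} ≠ {i', j'}`, the intersection of the images of the block
embeddings `ι_{ij}, ι_{i'j'} : O(2) → SO(3)` equals the group of diagonal matrices with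
diagonal entries in `{1, −1}` and determinant `1`. -/
theorem blockEmbed_images_intersection (i j i' j' : Fin 3) (hij : i < j) (hij' : i' < j')
    (hne : (i, j) ≠ (i', j')) :
    {M : Matrix (Fin 3) (Fin 3) ℝ | ∃ A, Aᵀ * A = 1 ∧ M = blockEmbed i j A} ∩
        {M | ∃ A, Aᵀ * A = 1 ∧ M = blockEmbed i' j' A} =
      {M | ∃ d : Fin 3 → ℝ, (∀ l, d l = 1 ∨ d l = -1) ∧ (Matrix.diagonal d).det = 1 ∧
        M = Matrix.diagonal d} := by
  ext M
  simp only [Set.mem_inter_iff, Set.mem_setOf_eq]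
  constructor
  · rintro ⟨⟨A, hA, rfl⟩, B, hB, hMB⟩
    fin_cases i <;> fin_cases j <;> fin_cases i' <;> fin_cases j' <;>
      first
      | exact absurd hij (by decide)
      | exact absurd hij' (by decide)
      | exact absurd rfl hne
      | (refine fwd _ _ (by decide) A hA ?_ ?_ <;>
         first
         | simpa [blockEmbed] using congrFun (congrFun hMB 0) 1
         | simpa [blockEmbed] using congrFun (congrFun hMB 1) 0
         | simpa [blockEmbed] using congrFun (congrFun hMB 0) 2
         | simpa [blockEmbed] using congrFun (congrFun hMB 2) 0
         | simpa [blockEmbed] using congrFun (congrFun hMB 1) 2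
         | simpa [blockEmbed] using congrFun (congrFun hMB 2) 1)
  · rintro ⟨d, hd, hdet, rfl⟩
    exact ⟨bwd i j hij d hd hdet, bwd i' j' hij' d hd hdet⟩
end

section
/- Let SU(3) = {U ∈ M₃(ℂ) : U*U = I, det U = 1} and let K ⊆ SU(3) be the subgroup of matrices with all entries real (so K is a copy of SO(3)). Then the normalizer N of K in SU(3) is the union K ∪ ωK ∪ ω²K, where ω = e^{2πi/3}·I is the scalar matrix with entry a primitive cube root of unity; consequently the quotient group N/K is cyclic of order 3. -/
/-!
If `g` normalises `K`, then for every `x ∈ K` the matrix `g x g⁻¹` is real, i.e. equal to `ḡ x ḡ⁻¹`,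
so `g⁻¹ ḡ` commutes with `K`. Already the rotations by `π` about two coordinate axes and the cyclic
permutation of the axes force `g⁻¹ ḡ = c • 1`, and taking determinants gives `c³ = 1`. Then `c⁻¹ g`
is real, so `g ∈ cK`; conversely, the scalar matrices `c • 1` with `c³ = 1` are central in `SU(3)`.
Hence `ζ ↦ ζK` is a bijection from the cube roots of unity onto `N/K`.
-/

open Matrix

/-- `SU(3)`: the subgroup of the unitary group `U(3)` of matrices of determinant one. -/
def SU3 : Subgroup (Matrix.unitaryGroup (Fin 3) ℂ) where
  carrier := {g | Matrix.det (g : Matrix (Fin 3) (Fin 3) ℂ) = 1}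
  one_mem' := by simp
  mul_mem' := by
    intro a b ha hb
    simp only [Set.mem_setOf_eq] at *
    rw [Matrix.UnitaryGroup.mul_val, Matrix.det_mul, ha, hb, mul_one]
  inv_mem' := by
    intro a ha
    simp only [Set.mem_setOf_eq] at *
    have h : ((a⁻¹ * a : Matrix.unitaryGroup (Fin 3) ℂ) : Matrix (Fin 3) (Fin 3) ℂ) = 1 := by
      rw [inv_mul_cancel]; rfl
    rw [Matrix.UnitaryGroup.mul_val] at h
    have := congrArg Matrix.det h
    rw [Matrix.det_mul, ha, mul_one, Matrix.det_one] at this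
    exact this

/-- A copy of `SO(3)` inside `SU(3)`: the subgroup of matrices with all entries real. -/
def K3 : Subgroup SU3 where
  carrier := {g | ∀ a b : Fin 3,
    (((g : Matrix.unitaryGroup (Fin 3) ℂ) : Matrix (Fin 3) (Fin 3) ℂ) a b).im = 0}
  one_mem' := by
    intro a b
    rcases eq_or_ne a b with h | h <;>
      simp [Matrix.one_apply, h]
  mul_mem' := by
    intro x y hx hy a b
    simp only [Set.mem_setOf_eq] at *
    show ((((x * y : SU3) : Matrix.unitaryGroup (Fin 3) ℂ) : Matrix (Fin 3) (Fin 3) ℂ) a b).im = 0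
    have hm : (((x * y : SU3) : Matrix.unitaryGroup (Fin 3) ℂ) : Matrix (Fin 3) (Fin 3) ℂ)
        = ((x : Matrix.unitaryGroup (Fin 3) ℂ) : Matrix (Fin 3) (Fin 3) ℂ)
          * ((y : Matrix.unitaryGroup (Fin 3) ℂ) : Matrix (Fin 3) (Fin 3) ℂ) := rfl
    rw [hm, Matrix.mul_apply, Complex.im_sum]
    refine Finset.sum_eq_zero fun c _ => ?_
    rw [Complex.mul_im, hx a c, hy c b]
    ring
  inv_mem' := by
    intro x hx a b
    simp only [Set.mem_setOf_eq] at *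
    have hm : (((x⁻¹ : SU3) : Matrix.unitaryGroup (Fin 3) ℂ) : Matrix (Fin 3) (Fin 3) ℂ)
        = star ((x : Matrix.unitaryGroup (Fin 3) ℂ) : Matrix (Fin 3) (Fin 3) ℂ) := rfl
    rw [hm, Matrix.star_apply]
    simp [hx b a]

open ComplexConjugate

theorem IsPrimitiveRoot.pow_three_eq_one_iff {R : Type*} [CommRing R] [IsDomain R] {ω ζ : R}
    (hω : IsPrimitiveRoot ω 3) : ζ ^ 3 = 1 ↔ ζ = 1 ∨ ζ = ω ∨ ζ = ω ^ 2 := by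
  refine ⟨fun hζ => ?_, ?_⟩
  · obtain ⟨i, hi, rfl⟩ := hω.eq_pow_of_pow_eq_one hζ
    interval_cases i <;> simp
  · rintro (rfl | rfl | rfl) <;> simp [pow_right_comm _ 2 3, hω.pow_eq_one]

section ComplexConjugation

variable {m n : Type*}

theorem Matrix.map_conj_eq_self_iff {A : Matrix m n ℂ} :
    A.map conj = A ↔ ∀ i j, (A i j).im = 0 := by
  simp [← Matrix.ext_iff, Complex.conj_eq_iff_im]

theorem Matrix.star_map_conj (A : Matrix n n ℂ) : star (A.map conj) = (star A).map conj :=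
  (conjTranspose_map _ fun _ => rfl).symm

theorem Matrix.map_conj_inv_smul_eq_self {U : Matrix m n ℂ} {c : ℂ} (hc : c ^ 3 = 1)
    (hU : U.map conj = c • U) : (c⁻¹ • U).map conj = c⁻¹ • U := by
  have hc0 : c ≠ 0 := by rintro rfl; norm_num at hc
  have hconj : conj c = c⁻¹ :=
    (Complex.inv_eq_conj (Complex.norm_eq_one_of_pow_eq_one hc three_ne_zero)).symm
  ext i j
  have hij := congrFun (congrFun hU i) j
  simp only [map_apply, smul_apply, smul_eq_mul, map_mul, map_inv₀, hconj, inv_inv] at hij ⊢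
  rw [hij]
  field_simp
  linear_combination (U i j) * hc

variable [Fintype n] [DecidableEq n]

theorem Matrix.map_conj_mem_unitaryGroup {U : Matrix n n ℂ} (hU : U ∈ unitaryGroup n ℂ) :
    U.map conj ∈ unitaryGroup n ℂ := by
  rw [mem_unitaryGroup_iff, star_map_conj, ← Matrix.map_mul, mem_unitaryGroup_iff.1 hU]
  simp

theorem Matrix.det_star_mul_map_conj (U : Matrix n n ℂ) :
    det (star U * U.map conj) = conj (det U) ^ 2 := by
  rw [det_mul, star_eq_conjTranspose, det_conjTranspose, ← RingHom.mapMatrix_apply,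
    ← RingHom.map_det, sq]
  rfl

theorem Matrix.commute_star_mul_map_conj {U X : Matrix n n ℂ} (hU : U ∈ unitaryGroup n ℂ)
    (hX : X.map conj = X) (hUX : (U * X * star U).map conj = U * X * star U) :
    Commute (star U * U.map conj) X := by
  have hŪ := map_conj_mem_unitaryGroup hU
  rw [Matrix.map_mul, Matrix.map_mul, hX, ← star_map_conj] at hUX
  calc star U * U.map conj * X
      = star U * (U.map conj * X * star (U.map conj)) * U.map conj := by
        simp only [mul_assoc, Unitary.star_mul_self_of_mem hŪ, mul_one]
    _ = X * (star U * U.map conj) := by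
        rw [hUX]
        simp only [← mul_assoc, Unitary.star_mul_self_of_mem hU, one_mul]

end ComplexConjugation

def rotPiX : Matrix (Fin 3) (Fin 3) ℤ := !![1, 0, 0; 0, -1, 0; 0, 0, -1]

def rotPiY : Matrix (Fin 3) (Fin 3) ℤ := !![-1, 0, 0; 0, 1, 0; 0, 0, -1]

def rotCyclic : Matrix (Fin 3) (Fin 3) ℤ := !![0, 1, 0; 0, 0, 1; 1, 0, 0]

theorem rotPiX_mem : rotPiX ∈ specialOrthogonalGroup (Fin 3) ℤ := by
  rw [mem_specialOrthogonalGroup_iff, mem_orthogonalGroup_iff]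
  decide

theorem rotPiY_mem : rotPiY ∈ specialOrthogonalGroup (Fin 3) ℤ := by
  rw [mem_specialOrthogonalGroup_iff, mem_orthogonalGroup_iff]
  decide

theorem rotCyclic_mem : rotCyclic ∈ specialOrthogonalGroup (Fin 3) ℤ := by
  rw [mem_specialOrthogonalGroup_iff, mem_orthogonalGroup_iff]
  decide

theorem Matrix.eq_smul_one_of_commute_rot {R : Type*} [CommRing R] [NoZeroDivisors R] [CharZero R]
    {C : Matrix (Fin 3) (Fin 3) R} (hX : Commute C (rotPiX.map (↑)))
    (hY : Commute C (rotPiY.map (↑))) (hc : Commute C (rotCyclic.map (↑))) : C = C 0 0 • 1 := by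
  have eX := hX.eq
  have eY := hY.eq
  have ec := hc.eq
  rw [← Matrix.ext_iff] at eX eY ec ⊢
  simp only [rotPiX, rotPiY, rotCyclic, Int.reduceNeg, mul_apply, map_apply, of_apply, cons_val',
    cons_val_fin_one, Fin.sum_univ_succ, Fin.isValue, cons_val_zero, cons_val_succ,
    Fin.succ_zero_eq_one, Finset.univ_unique, Fin.default_eq_zero, Finset.sum_singleton,
    Fin.succ_one_eq_two, Fin.forall_fin_succ, Int.cast_one, mul_one, Int.cast_zero, mul_zero,
    add_zero, Int.cast_neg, mul_neg, zero_add, IsEmpty.forall_iff, and_true, one_mul, zero_mul,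
    true_and, neg_mul, and_self, neg_inj] at eX eY ec
  simp only [Fin.isValue, Matrix.smul_apply, one_apply, smul_eq_mul, mul_ite, mul_one, mul_zero,
    Fin.forall_fin_succ, Fin.succ_zero_eq_one, Fin.succ_one_eq_two, IsEmpty.forall_iff, and_true,
    ↓reduceIte, zero_ne_one, Fin.reduceEq, true_and, Fin.succ_ne_zero]
  grind

namespace SU3

@[ext]
theorem ext {g h : SU3} (H : (g : Matrix (Fin 3) (Fin 3) ℂ) = h) : g = h :=
  Subtype.ext (Subtype.ext H)

theorem coe_mem_unitaryGroup (g : SU3) : (g : Matrix (Fin 3) (Fin 3) ℂ) ∈ unitaryGroup (Fin 3) ℂ :=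
  g.1.2

theorem det_coe (g : SU3) : det (g : Matrix (Fin 3) (Fin 3) ℂ) = 1 := g.2

end SU3

def K3.ofInt (A : Matrix (Fin 3) (Fin 3) ℤ) (hA : A ∈ specialOrthogonalGroup (Fin 3) ℤ) : K3 :=
  ⟨⟨⟨A.map (Int.castRingHom ℂ), by
      rw [mem_unitaryGroup_iff, star_eq_conjTranspose, ← conjTranspose_map _ fun _ => by simp,
        ← Matrix.map_mul, conjTranspose_eq_transpose_of_trivial,
        (mem_orthogonalGroup_iff _ _).1 (mem_specialOrthogonalGroup_iff.1 hA).1]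
      simp⟩,
    by
      show det (A.map (Int.castRingHom ℂ)) = 1
      rw [← RingHom.mapMatrix_apply, ← RingHom.map_det, (mem_specialOrthogonalGroup_iff.1 hA).2,
        map_one]⟩,
    fun i j => by simp⟩

noncomputable def scalarSU3 : rootsOfUnity 3 ℂ →* SU3 where
  toFun ζ := ⟨⟨((ζ : ℂˣ) : ℂ) • 1, by
      rw [mem_unitaryGroup_iff, star_smul, star_one, smul_mul_smul_comm, one_mul, Complex.star_def,
        Complex.conj_rootsOfUnity ζ.2, ← Units.val_mul, mul_inv_cancel, Units.val_one, one_smul]⟩,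
    by
      show det (((ζ : ℂˣ) : ℂ) • (1 : Matrix (Fin 3) (Fin 3) ℂ)) = 1
      rw [det_smul, det_one, mul_one, Fintype.card_fin, ← Units.val_pow_eq_pow_val,
        (mem_rootsOfUnity 3 _).1 ζ.2, Units.val_one]⟩
  map_one' := SU3.ext (by simp)
  map_mul' ζ ξ := SU3.ext (by simp [smul_smul, mul_comm])

theorem coe_scalarSU3 (ζ : rootsOfUnity 3 ℂ) :
    ((scalarSU3 ζ : SU3) : Matrix (Fin 3) (Fin 3) ℂ) = ((ζ : ℂˣ) : ℂ) • 1 := rfl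

theorem coe_scalarSU3_mul (ζ : rootsOfUnity 3 ℂ) (g : SU3) :
    ((scalarSU3 ζ * g : SU3) : Matrix (Fin 3) (Fin 3) ℂ) =
      ((ζ : ℂˣ) : ℂ) • (g : Matrix (Fin 3) (Fin 3) ℂ) := by
  change ((scalarSU3 ζ : SU3) : Matrix (Fin 3) (Fin 3) ℂ) * g = _
  rw [coe_scalarSU3, smul_mul_assoc, one_mul]

theorem scalarSU3_mem_center (ζ : rootsOfUnity 3 ℂ) : scalarSU3 ζ ∈ Subgroup.center SU3 :=
  Subgroup.mem_center_iff.2 fun g => SU3.ext (by simp [coe_scalarSU3])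

theorem scalarSU3_mem_K3_iff {ζ : rootsOfUnity 3 ℂ} : scalarSU3 ζ ∈ K3 ↔ ζ = 1 := by
  refine ⟨fun h => ?_, fun h => by rw [h, map_one]; exact one_mem K3⟩
  have hreal := Complex.conj_eq_iff_im.2 (h 0 0)
  rw [coe_scalarSU3, Matrix.smul_apply, one_apply_eq, smul_eq_mul, mul_one,
    Complex.conj_rootsOfUnity ζ.2, Units.val_inj] at hreal
  have hsq : (ζ : ℂˣ) ^ 2 = 1 := by
    rw [sq]
    nth_rewrite 1 [← hreal]
    exact inv_mul_cancel _
  have := pow_gcd_eq_one.2 ⟨(mem_rootsOfUnity 3 _).1 ζ.2, hsq⟩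
  exact Subtype.ext (by simpa using this)

theorem exists_eq_scalarSU3_mul_of_mem_normalizer {g : SU3}
    (hg : g ∈ Subgroup.normalizer (K3 : Set SU3)) : ∃ ζ, ∃ h ∈ K3, g = scalarSU3 ζ * h := by
  set G := (g : Matrix (Fin 3) (Fin 3) ℂ)
  set c := (star G * G.map conj) 0 0
  have hcomm (x : SU3) (hx : x ∈ K3) : Commute (star G * G.map conj) x :=
    commute_star_mul_map_conj (SU3.coe_mem_unitaryGroup g) (map_conj_eq_self_iff.2 hx)
      (map_conj_eq_self_iff.2 ((Subgroup.mem_normalizer_iff.1 hg x).1 hx))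
  have hscalar : star G * G.map conj = c • 1 :=
    eq_smul_one_of_commute_rot (hcomm _ (K3.ofInt _ rotPiX_mem).2)
      (hcomm _ (K3.ofInt _ rotPiY_mem).2) (hcomm _ (K3.ofInt _ rotCyclic_mem).2)
  have hc : c ^ 3 = 1 := by
    have := congrArg det hscalar
    rwa [det_star_mul_map_conj, SU3.det_coe, map_one, one_pow, det_smul, det_one, mul_one,
      Fintype.card_fin, eq_comm] at this
  have hconj : G.map conj = c • G := by
    calc G.map conj = G * star G * G.map conj := by
          rw [Unitary.mul_star_self_of_mem (SU3.coe_mem_unitaryGroup g), one_mul]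
      _ = c • G := by rw [mul_assoc, hscalar, mul_smul_comm, mul_one]
  set ζ := rootsOfUnity.mkOfPowEq c hc
  refine ⟨ζ, scalarSU3 ζ⁻¹ * g, map_conj_eq_self_iff.1 ?_,
    by rw [← mul_assoc, ← map_mul, mul_inv_cancel, map_one, one_mul]⟩
  have hcoe : ((scalarSU3 ζ⁻¹ * g : SU3) : Matrix (Fin 3) (Fin 3) ℂ) = c⁻¹ • G := by
    rw [coe_scalarSU3_mul]
    simp [ζ, G]
  rw [hcoe]
  exact map_conj_inv_smul_eq_self hc hconj

theorem scalarSU3_mul_mem_normalizer (ζ : rootsOfUnity 3 ℂ) {h : SU3} (hh : h ∈ K3) :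
    scalarSU3 ζ * h ∈ Subgroup.normalizer (K3 : Set SU3) :=
  mul_mem (Subgroup.center_le_normalizer _ (scalarSU3_mem_center ζ)) (Subgroup.le_normalizer hh)

theorem mem_normalizer_K3_iff_exists_smul {g : SU3} :
    g ∈ Subgroup.normalizer (K3 : Set SU3) ↔ ∃ h ∈ K3, ∃ c : ℂ, c ^ 3 = 1 ∧
      (g : Matrix (Fin 3) (Fin 3) ℂ) = c • (h : Matrix (Fin 3) (Fin 3) ℂ) := by
  refine ⟨fun hg => ?_, fun ⟨h, hh, c, hc, hg⟩ => ?_⟩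
  · obtain ⟨ζ, h, hh, rfl⟩ := exists_eq_scalarSU3_mul_of_mem_normalizer hg
    exact ⟨h, hh, (ζ : ℂˣ), (mem_rootsOfUnity' 3 _).1 ζ.2, coe_scalarSU3_mul ζ h⟩
  · convert scalarSU3_mul_mem_normalizer (rootsOfUnity.mkOfPowEq c hc) hh
    exact SU3.ext (by rw [hg, coe_scalarSU3_mul, rootsOfUnity.val_mkOfPowEq_coe])

theorem card_normalizer_K3_quotient :
    Nat.card (Subgroup.normalizer (K3 : Set SU3) ⧸
      K3.subgroupOf (Subgroup.normalizer (K3 : Set SU3))) = 3 := by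
  set N := Subgroup.normalizer (K3 : Set SU3)
  let f : rootsOfUnity 3 ℂ →* N ⧸ K3.subgroupOf N := (QuotientGroup.mk' _).comp
    (scalarSU3.codRestrict N fun ζ => Subgroup.center_le_normalizer _ (scalarSU3_mem_center ζ))
  have hf : Function.Bijective f := by
    refine ⟨(injective_iff_map_eq_one f).2 fun ζ hζ => ?_, fun q => ?_⟩
    · rwa [MonoidHom.comp_apply, QuotientGroup.mk'_apply, QuotientGroup.eq_one_iff,
        Subgroup.mem_subgroupOf, MonoidHom.codRestrict_apply, scalarSU3_mem_K3_iff] at hζ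
    · obtain ⟨g, rfl⟩ := QuotientGroup.mk'_surjective _ q
      obtain ⟨ζ, h, hh, hg⟩ := exists_eq_scalarSU3_mul_of_mem_normalizer g.2
      refine ⟨ζ, QuotientGroup.eq.2 ?_⟩
      simp [Subgroup.mem_subgroupOf, hg, hh]
  rw [← Nat.card_eq_of_bijective f hf, Complex.card_rootsOfUnity]

/-- The normalizer of `K = SO(3)` in `SU(3)` is the union `K ∪ ωK ∪ ω²K`, where
`ω = e^{2πi/3}·I` is the scalar matrix with entry a primitive cube root of unity;
consequently the quotient group `N/K` is cyclic of order `3`. -/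
theorem normalizer_SO3_in_SU3 :
    ((Subgroup.normalizer (K3 : Set SU3) : Set SU3) =
      {g : SU3 | ∃ h ∈ K3,
        g = h ∨
          ((g : Matrix.unitaryGroup (Fin 3) ℂ) : Matrix (Fin 3) (Fin 3) ℂ) =
            Complex.exp (2 * Real.pi * Complex.I / 3) •
              ((h : Matrix.unitaryGroup (Fin 3) ℂ) : Matrix (Fin 3) (Fin 3) ℂ) ∨
          ((g : Matrix.unitaryGroup (Fin 3) ℂ) : Matrix (Fin 3) (Fin 3) ℂ) =
            Complex.exp (2 * Real.pi * Complex.I / 3) ^ 2 •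
              ((h : Matrix.unitaryGroup (Fin 3) ℂ) : Matrix (Fin 3) (Fin 3) ℂ)}) ∧
      Nonempty ((Subgroup.normalizer (K3 : Set SU3) ⧸ K3.subgroupOf (Subgroup.normalizer (K3 : Set SU3))) ≃* Multiplicative (ZMod 3)) := by
  have hω : IsPrimitiveRoot (Complex.exp (2 * Real.pi * Complex.I / 3)) 3 := by
    simpa using Complex.isPrimitiveRoot_exp 3 three_ne_zero
  refine ⟨Set.ext fun g => ?_, ⟨mulEquivOfPrimeCardEq card_normalizer_K3_quotient (by simp)⟩⟩
  simp only [SetLike.mem_coe, mem_normalizer_K3_iff_exists_smul, hω.pow_three_eq_one_iff]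
  refine exists_congr fun h => and_congr_right fun _ => ?_
  simp only [or_and_right, exists_or, exists_eq_left, one_smul, ← SU3.ext_iff]
end

section
/- If a group G contains a commutative subgroup of finite index, then there is no injective group homomorphism from the free group on two generators into G. In particular, no subgroup of finite index in the free group on two generators is commutative. -/
universe u

/-- A reduced word `a^m b^n` (with `a ≠ b`) is reduced. -/
lemma reduce_replicate_append {α : Type*} [DecidableEq α] {a b : α} (hab : a ≠ b) (m n : ℕ) :
    FreeGroup.reduce (List.replicate m (a, true) ++ List.replicate n (b, true)) =
      List.replicate m (a, true) ++ List.replicate n (b, true) := by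
  induction m with
  | zero => exact FreeGroup.reduce_replicate n (b, true)
  | succ m ih =>
    rw [List.replicate_succ, List.cons_append, FreeGroup.reduce.cons, ih]
    cases m with
    | zero =>
      cases n with
      | zero => rfl
      | succ n => simp [List.replicate_succ, hab]
    | succ m => simp [List.replicate_succ]

/-- In a free group, positive powers of two distinct generators do not commute. -/
lemma pow_not_commute {a b : Fin 2} (hab : a ≠ b) {m n : ℕ} (hm : m ≠ 0) (hn : n ≠ 0) :
    FreeGroup.of a ^ m * FreeGroup.of b ^ n ≠ FreeGroup.of b ^ n * FreeGroup.of a ^ m := by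
  intro h
  have h' := congrArg FreeGroup.toWord h
  have key : ∀ (x y : Fin 2) (p q : ℕ), x ≠ y →
      (FreeGroup.of x ^ p * FreeGroup.of y ^ q).toWord =
        List.replicate p (x, true) ++ List.replicate q (y, true) := by
    intro x y p q hxy
    have h1 : FreeGroup.of x ^ p * FreeGroup.of y ^ q =
        FreeGroup.mk (List.replicate p (x, true) ++ List.replicate q (y, true)) := by
      rw [← FreeGroup.mul_mk]
      congr 1
      · rw [← FreeGroup.toWord_of_pow x p, FreeGroup.mk_toWord]
      · rw [← FreeGroup.toWord_of_pow y q, FreeGroup.mk_toWord]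
    rw [h1, FreeGroup.toWord_mk, reduce_replicate_append hxy]
  rw [key a b m n hab, key b a n m hab.symm] at h'
  obtain ⟨m, rfl⟩ := Nat.exists_eq_succ_of_ne_zero hm
  obtain ⟨n, rfl⟩ := Nat.exists_eq_succ_of_ne_zero hn
  simp only [List.replicate_succ, List.cons_append, List.cons.injEq] at h'
  exact hab (congrArg Prod.fst h'.1)

/-- No finite-index subgroup of the free group on two generators is commutative. -/
lemma no_finiteIndex_comm (K : Subgroup (FreeGroup (Fin 2))) (hK : K.FiniteIndex) :
    ¬∀ a b : K, a * b = b * a := by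
  intro hcomm
  haveI := hK
  set N := K.normalCore with hN
  haveI : N.FiniteIndex := Subgroup.finiteIndex_normalCore K
  haveI : N.Normal := Subgroup.normalCore_normal K
  set m := N.index with hm
  have hm0 : m ≠ 0 := Subgroup.FiniteIndex.index_ne_zero
  have ha : FreeGroup.of (0 : Fin 2) ^ m ∈ K :=
    K.normalCore_le (N.pow_index_mem _)
  have hb : FreeGroup.of (1 : Fin 2) ^ m ∈ K :=
    K.normalCore_le (N.pow_index_mem _)
  have := hcomm ⟨_, ha⟩ ⟨_, hb⟩
  have heq : FreeGroup.of (0 : Fin 2) ^ m * FreeGroup.of (1 : Fin 2) ^ m =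
      FreeGroup.of (1 : Fin 2) ^ m * FreeGroup.of (0 : Fin 2) ^ m :=
    congrArg Subtype.val this
  exact pow_not_commute (by decide) hm0 hm0 heq

/-- If a group `G` contains a commutative subgroup of finite index, then there is no injective
group homomorphism from the free group on two generators into `G`. In particular, no
finite-index subgroup of the free group on two generators is commutative. -/
theorem no_free_group_in_virtually_abelian :
    (∀ (G : Type u) [Group G] (H : Subgroup G), (∀ a b : H, a * b = b * a) → H.FiniteIndex →
        ¬∃ f : FreeGroup (Fin 2) →* G, Function.Injective f) ∧
      ∀ K : Subgroup (FreeGroup (Fin 2)), K.FiniteIndex → ¬∀ a b : K, a * b = b * a := by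
  constructor
  · intro G _ H hcomm hfin ⟨f, hf⟩
    haveI := hfin
    have hKfin : (H.comap f).FiniteIndex := by
      constructor
      rw [Subgroup.index_comap]
      exact (Subgroup.instFiniteIndex_subgroupOf H f.range).index_ne_zero
    refine no_finiteIndex_comm (H.comap f) hKfin ?_
    intro a b
    have : f (a * b : FreeGroup (Fin 2)) = f (b * a : FreeGroup (Fin 2)) := by
      rw [map_mul, map_mul]
      exact congrArg Subtype.val (hcomm ⟨f a, a.2⟩ ⟨f b, b.2⟩)
    ext
    exact hf this
  · exact no_finiteIndex_comm
end
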